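/- Let f : 2^V → ℝ be a symmetric submodular function on a finite set V of cardinality n ≥ 2, let α ∈ [−1, 1], and let (v_1, …, v_n) be an α-ordering of V with respect to f. Then (v_{n−1}, v_n) is a contractible pair with respect to f. -/

import Mathlib

open Finset

def Submodular {V : Type*} [DecidableEq V] [Fintype V] (f : Finset V → ℝ) : Prop :=
  ∀ X Y : Finset V, f X + f Y ≥ f (X ∪ Y) + f (X ∩ Y)

def prefSet {V : Type*} [DecidableEq V] {n : ℕ} (v : Fin n → V) (i : Fin n) : Finset V :=
  (Finset.univ.filter (fun k : Fin n => k < i)).image v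

def IsAlphaOrdering {V : Type*} [DecidableEq V] {n : ℕ} (α : ℝ)
    (f : Finset V → ℝ) (v : Fin n → V) : Prop :=
  ∀ i j : Fin n, i ≤ j →
    f (insert (v i) (prefSet v i)) + α * f {v i} ≤
      f (insert (v j) (prefSet v i)) + α * f {v j}

def ContractiblePair {V : Type*} [DecidableEq V] [Fintype V]
    (f : Finset V → ℝ) (u w : V) : Prop :=
  ∀ X : Finset V, X ⊂ Finset.univ → (X ∩ ({u, w} : Finset V)).card = 1 →
    Finset.univ.inf' ⟨u, Finset.mem_univ u⟩ (fun x => f {x}) ≤ f X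

/-!
Pull `f` back to positions, `g T = f (v '' T)`. For `S ⊆ Fin n` and consecutive positions
`u ⋖ t` with `u ∉ S`, `t ∈ S`, strong induction on `t` gives
`g (Iio t) + (1 + α) g {m} ≤ g (S ∩ Iic t) + g (Iic t \ S) + α g {t}`, `m` the first position:
if `r` is the last position of `S` before `t` and `r ⋖ s`, the pair `r ⋖ s` is separated by `Sᶜ`,
and two applications of submodularity plus the ordering inequality at `(s, t)` carry the bound
from `s` to `t`. At the last position `S` pulls back `X`, the right side is `f X + f Xᶜ + α f {vₙ}`
and `g (Iio t) = f {vₙ}ᶜ = f {vₙ}`, so `(1 - α) f {vₙ} + (1 + α) f {v₁} ≤ 2 f X`; for `|α| ≤ 1`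
the left side is at least twice the minimal singleton value.
-/

section LinearOrder

variable {ι : Type*} [LinearOrder ι] [LocallyFiniteOrderBot ι]

def AlphaOrdered (α : ℝ) (g : Finset ι → ℝ) : Prop :=
  ∀ i j : ι, i ≤ j → g (Iic i) + α * g {i} ≤ g (insert j (Iio i)) + α * g {j}

variable {α : ℝ} {g : Finset ι → ℝ}

theorem AlphaOrdered.singleton_le (hord : AlphaOrdered α g) {m : ι} (hm : IsBot m) (t : ι) :
    g {m} + α * g {m} ≤ g {t} + α * g {t} := by
  simpa [Iio_eq_empty.mpr hm.isMin, ← Iio_insert] using hord m t (hm t)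

theorem AlphaOrdered.apply_Iio_add_le_of_covBy [Fintype ι] (hg : Submodular g)
    (hord : AlphaOrdered α g) {m : ι} (hm : IsBot m) (t : ι) :
    ∀ (S : Finset ι) (u : ι), u ⋖ t → u ∉ S → t ∈ S →
      g (Iio t) + (1 + α) * g {m} ≤ g (S ∩ Iic t) + g (Iic t \ S) + α * g {t} := by
  induction t using WellFoundedLT.induction with
  | _ t ih =>
  intro S u hut hu ht
  by_cases hR : ((Iio t).filter (· ∈ S)).Nonempty
  · set r := ((Iio t).filter (· ∈ S)).max' hR
    obtain ⟨hrt, hr⟩ : r < t ∧ r ∈ S := by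
      simpa [r] using ((Iio t).filter (· ∈ S)).max'_mem hR
    have hgap : ∀ p, r < p → p < t → p ∉ S := fun p hrp hpt hp =>
      hrp.not_ge (le_max' _ p (by simp [hpt, hp]))
    obtain ⟨s, hrs, hst⟩ := exists_covBy_le_of_lt hrt
    have hst : s < t := hst.lt_of_ne fun h => hu (hut.unique_left (h ▸ hrs) ▸ hr)
    have hs : s ∉ S := hgap s hrs.lt hst
    have hgap' : ∀ p, s ≤ p → p < t → p ∉ S := fun p hsp => hgap p (hrs.lt.trans_le hsp)
    have IH := ih s hst Sᶜ r hrs (by simpa using hr) (by simpa using hs)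
    rw [inter_comm, ← sdiff_eq_inter_compl, sdiff_compl, inf_eq_inter, inter_comm] at IH
    have hA₁ : S ∩ Iic t ∪ Iio s = insert t (Iio s) := by
      ext p; have := hgap' p; simp only [mem_union, mem_inter, mem_Iic, mem_Iio, mem_insert]; grind
    have hA₂ : S ∩ Iic t ∩ Iio s = S ∩ Iic s := by
      ext p; simp only [mem_inter, mem_Iic, mem_Iio]; grind
    have hB₁ : Iic t \ S ∪ Iic s = Iio t := by
      ext p; have := hgap' p; simp only [mem_union, mem_sdiff, mem_Iic, mem_Iio]; grind
    have hB₂ : Iic t \ S ∩ Iic s = Iic s \ S := by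
      ext p; simp only [mem_inter, mem_sdiff, mem_Iic]; grind
    have h₁ := hg (S ∩ Iic t) (Iio s)
    have h₂ := hg (Iic t \ S) (Iic s)
    rw [hA₁, hA₂] at h₁
    rw [hB₁, hB₂] at h₂
    linarith [hord s t hst.le]
  · have hS : ∀ p < t, p ∉ S := fun p hpt hp => hR ⟨p, by simp [hpt, hp]⟩
    have hA : S ∩ Iic t = {t} := by
      ext p
      simp only [mem_inter, mem_Iic, mem_singleton]
      exact ⟨fun ⟨hp, hpt⟩ => by_contra fun h => hS p (lt_of_le_of_ne hpt h) hp,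
        by rintro rfl; exact ⟨ht, le_rfl⟩⟩
    have hB : Iic t \ S = Iio t := by
      ext p
      simp only [mem_sdiff, mem_Iic, mem_Iio]
      exact ⟨fun ⟨hpt, hp⟩ => lt_of_le_of_ne hpt fun h => hp (h ▸ ht),
        fun hpt => ⟨hpt.le, hS p hpt⟩⟩
    rw [hA, hB]
    linarith [hord.singleton_le hm t]

end LinearOrder

section Transport

variable {V : Type*} [DecidableEq V] {f : Finset V → ℝ}

theorem Submodular.comp_image [Fintype V] {ι : Type*} [DecidableEq ι] [Fintype ι]
    (hf : Submodular f) {v : ι → V} (hv : Function.Injective v) :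
    Submodular (fun T : Finset ι => f (T.image v)) := by
  intro A B
  simpa only [image_union, image_inter _ _ hv] using hf (A.image v) (B.image v)

theorem Finset.xor_mem_of_card_inter_pair_eq_one {X : Finset V} {a b : V} (hab : a ≠ b)
    (h : (X ∩ {a, b}).card = 1) : Xor (a ∈ X) (b ∈ X) := by
  by_cases ha : a ∈ X <;> by_cases hb : b ∈ X <;> simp_all

variable {n : ℕ} {v : Fin n → V} {α : ℝ}

theorem IsAlphaOrdering.alphaOrdered_comp_image (hord : IsAlphaOrdering α f v) :
    AlphaOrdered α (fun T : Finset (Fin n) => f (T.image v)) := by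
  intro i j hij
  simpa [prefSet, filter_gt_eq_Iio, ← Iio_insert] using hord i j hij

theorem IsAlphaOrdering.inf'_le_of_isTop [Fintype V] (hsym : ∀ X : Finset V, f X = f Xᶜ)
    (hf : Submodular f) (hα : α ∈ Set.Icc (-1 : ℝ) 1) (hv : Function.Bijective v)
    (hord : IsAlphaOrdering α f v) {m u t : Fin n} (hm : IsBot m) (hut : u ⋖ t) (ht : IsTop t)
    (hV : (univ : Finset V).Nonempty) {Y : Finset V} (hu : v u ∉ Y) (htY : v t ∈ Y) :
    univ.inf' hV (fun x => f {x}) ≤ f Y := by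
  have key := hord.alphaOrdered_comp_image.apply_Iio_add_le_of_covBy
    (hf.comp_image hv.injective) hm t
    (Y.preimage v hv.injective.injOn) u hut (by simpa using hu) (by simpa using htY)
  have hIio : Iio t = ({v t}ᶜ : Finset V).preimage v hv.injective.injOn := by
    ext p; simp [lt_iff_le_and_ne, ht p, hv.injective.eq_iff]
  have hS : Y.preimage v hv.injective.injOn ∩ Iic t = Y.preimage v hv.injective.injOn := by
    ext p; simp [ht p]
  have hSc : Iic t \ Y.preimage v hv.injective.injOn = Yᶜ.preimage v hv.injective.injOn := by
    ext p; simp [ht p]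
  simp only [hIio, hS, hSc, image_preimage_of_bijective _ hv, image_singleton, ← hsym] at key
  have hmin_t := inf'_le (fun x => f {x}) (mem_univ (v t))
  have hmin_m := inf'_le (fun x => f {x}) (mem_univ (v m))
  nlinarith [hα.1, hα.2]

end Transport

/-- Corollary 5.4: for a symmetric submodular `f`, `α ∈ [-1, 1]`, and an `α`-ordering
`(v_1, …, v_n)` of `V`, the pair `(v_{n-1}, v_n)` is contractible. -/
theorem stmt_5 {n : ℕ} (hn : 2 ≤ n) {V : Type*} [DecidableEq V] [Fintype V]
    (f : Finset V → ℝ) (hsym : ∀ X : Finset V, f X = f Xᶜ) (hf : Submodular f)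
    (α : ℝ) (hα : α ∈ Set.Icc (-1 : ℝ) 1)
    (v : Fin n → V) (hv : Function.Bijective v)
    (hord : IsAlphaOrdering α f v) :
    ContractiblePair f (v ⟨n - 2, by omega⟩) (v ⟨n - 1, by omega⟩) := by
  intro X _ hX
  have hm : IsBot (⟨0, by omega⟩ : Fin n) := fun p => Fin.mk_le_of_le_val (Nat.zero_le _)
  have hut : (⟨n - 2, by omega⟩ : Fin n) ⋖ ⟨n - 1, by omega⟩ :=
    Fin.covBy_iff.mpr (Nat.covBy_iff_add_one_eq.mpr (by simp only; omega))
  have ht : IsTop (⟨n - 1, by omega⟩ : Fin n) := fun p => Fin.le_def.mpr (by simp only; omega)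
  have hne : v ⟨n - 2, by omega⟩ ≠ v ⟨n - 1, by omega⟩ := hv.injective.ne (by simp; omega)
  rcases Finset.xor_mem_of_card_inter_pair_eq_one hne hX with ⟨hu, ht'⟩ | ⟨ht', hu⟩
  · rw [hsym X]
    exact hord.inf'_le_of_isTop hsym hf hα hv hm hut ht _ (by simpa using hu) (by simpa using ht')
  · exact hord.inf'_le_of_isTop hsym hf hα hv hm hut ht _ hu ht'
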